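/- Let Λ = {2^n : n ∈ ℤ} ∪ {−2^n : n ∈ ℤ} and let (uₙ)_{n∈ℤ} be real numbers vanishing for all but finitely many n. Define u : Λ → ℂ by u(2ⁿ) = i·uₙ and u(−2ⁿ) = −i·uₙ. Let ∗ denote twice the standard convolution on Λ, i.e. (f ∗ g)(k) = 2·Σ_{p,q ∈ Λ, p+q=k} f(p)g(q), and ∂ₓf(k) = i·k·f(k). Then for every n ∈ ℤ, −(u ∗ ∂ₓu)(2ⁿ) = i·(2ⁿ·uₙ₋₁² − 2^{n+1}·uₙ₊₁·uₙ). Consequently, the inviscid Burgers equation ∂_t u + u ∗ ∂ₓu = 0 on Λ is equivalent to the Desnyansky–Novikov shell model ∂_t uₙ = kₙ·uₙ₋₁² − kₙ₊₁·uₙ₊₁·uₙ with kₙ = 2ⁿ. -/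

import Mathlib

/-!
Put `k = 2ⁿ`. A sum of two powers of `2` is a power of `2` only when the two are equal, so the
only splittings `k = p + q` inside `Λ(2)` are `2k + (-k)`, `(-k) + 2k` and `k/2 + k/2`. The
convolution at `k` therefore has exactly three terms: the first two together contribute
`i k uₙ₊₁ uₙ` and the last `-i (k/2) uₙ₋₁²`, which the factor `-2` turns into the shell model.
-/

open scoped Classical

/-- The logarithmic lattice with spacing `l`: the set `{±l^n : n ∈ ℤ} ⊆ ℝ`. -/
def logLattice (l : ℝ) : Set ℝ := {x | ∃ n : ℤ, x = l ^ n ∨ x = -(l ^ n)}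

/-- Twice the standard convolution on a lattice `Λ ⊆ ℝ`:
`(f ∗ g)(k) = 2 Σ_{p,q ∈ Λ, p+q=k} f(p) g(q)`. -/
noncomputable def latticeConvTwo (Λ : Set ℝ) (f g : ℝ → ℂ) (k : ℝ) : ℂ :=
  2 * ∑ᶠ p ∈ Λ, ∑ᶠ q ∈ Λ, if p + q = k then f p * g q else 0

/-- The lattice derivative `∂ₓ f(k) = i k f(k)`. -/
noncomputable def latticeDeriv (f : ℝ → ℂ) : ℝ → ℂ := fun k => Complex.I * (k : ℂ) * f k

lemma two_zpow_add_one (n : ℤ) : (2 : ℝ) ^ (n + 1) = 2 * 2 ^ n := by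
  rw [zpow_add_one₀ two_ne_zero, mul_comm]

lemma two_zpow_eq_two_mul_zpow_sub_one (n : ℤ) : (2 : ℝ) ^ n = 2 * 2 ^ (n - 1) := by
  rw [← two_zpow_add_one, sub_add_cancel]

lemma two_zpow_add_two_zpow_eq {a b n : ℤ} (h : (2 : ℝ) ^ a + 2 ^ b = 2 ^ n) :
    a = n - 1 ∧ b = n - 1 := by
  wlog hab : a ≤ b generalizing a b
  · exact (this (by linarith) (by omega)).symm
  have h2 : (1 : ℝ) < 2 := by norm_num
  have hb : b < n := by
    rw [← zpow_lt_zpow_iff_right₀ h2]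
    linarith [zpow_pos (zero_lt_two' ℝ) a]
  have hn : n ≤ b + 1 := by
    rw [← zpow_le_zpow_iff_right₀ h2, two_zpow_add_one]
    linarith [(zpow_le_zpow_iff_right₀ h2).mpr hab]
  obtain rfl : n = b + 1 := by omega
  have : (2 : ℝ) ^ a = 2 ^ b := by rw [two_zpow_add_one] at h; linarith
  have := zpow_right_injective₀ (zero_lt_two' ℝ) (by norm_num) this
  omega

lemma logLattice_two_sep_sub_mem (n : ℤ) :
    {p ∈ logLattice 2 | (2 : ℝ) ^ n - p ∈ logLattice 2} =
      {2 ^ (n + 1), -2 ^ n, 2 ^ (n - 1)} := by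
  have hsucc := two_zpow_add_one n
  have hpred := two_zpow_eq_two_mul_zpow_sub_one n
  have hpos : ∀ m : ℤ, (0 : ℝ) < 2 ^ m := fun m => zpow_pos (zero_lt_two' ℝ) m
  ext p
  simp only [Set.mem_insert_iff, Set.mem_singleton_iff, logLattice, Set.mem_ofPred_eq]
  constructor
  · rintro ⟨⟨a, rfl | rfl⟩, b, hb | hb⟩
    · obtain ⟨rfl, -⟩ := two_zpow_add_two_zpow_eq (a := a) (b := b) (n := n) (by linarith)
      exact .inr (.inr rfl)
    · obtain ⟨rfl, -⟩ := two_zpow_add_two_zpow_eq (a := n) (b := b) (n := a) (by linarith)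
      exact .inl (by rw [sub_add_cancel])
    · obtain ⟨hn, ha⟩ := two_zpow_add_two_zpow_eq (a := n) (b := a) (n := b) (by linarith)
      exact .inr (.inl (by rw [show a = n by omega]))
    · linarith [hpos a, hpos b, hpos n]
  · rintro (rfl | rfl | rfl)
    · exact ⟨⟨n + 1, .inl rfl⟩, n, .inr (by linarith)⟩
    · exact ⟨⟨n, .inr rfl⟩, n + 1, .inl (by linarith)⟩
    · exact ⟨⟨n - 1, .inl rfl⟩, n - 1, .inl (by linarith)⟩

lemma latticeConvTwo_eq_finsum (Λ : Set ℝ) (f g : ℝ → ℂ) (k : ℝ) :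
    latticeConvTwo Λ f g k = 2 * ∑ᶠ p ∈ {p ∈ Λ | k - p ∈ Λ}, f p * g (k - p) := by
  have inner : ∀ p, (∑ᶠ q ∈ Λ, if p + q = k then f p * g q else 0) =
      if k - p ∈ Λ then f p * g (k - p) else 0 := by
    intro p
    rw [finsum_mem_def, finsum_eq_single _ (k - p)]
    · by_cases h : k - p ∈ Λ <;> simp [h]
    · intro q hq
      have : p + q ≠ k := fun h => hq (by linarith)
      simp [Set.indicator_apply, this]
  rw [latticeConvTwo, finsum_mem_congr rfl fun p _ => inner p]
  congr 1
  rw [finsum_mem_congr (t := {p ∈ Λ | k - p ∈ Λ}) rfl fun p hp => (if_pos hp.2).symm]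
  exact finsum_mem_inter_support_eq' _ _ _ fun p hp =>
    ⟨fun h => ⟨h, by by_contra h'; exact hp (if_neg h')⟩, And.left⟩

lemma latticeConvTwo_logLattice_two_zpow (f g : ℝ → ℂ) (n : ℤ) :
    latticeConvTwo (logLattice 2) f g (2 ^ n) =
      2 * (f (2 ^ (n + 1)) * g (-2 ^ n) + f (-2 ^ n) * g (2 ^ (n + 1)) +
        f (2 ^ (n - 1)) * g (2 ^ (n - 1))) := by
  have hpos : ∀ m : ℤ, (0 : ℝ) < 2 ^ m := fun m => zpow_pos (zero_lt_two' ℝ) m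
  have hsucc_ne_pred : (2 : ℝ) ^ (n + 1) ≠ 2 ^ (n - 1) :=
    fun h => by have := zpow_right_injective₀ (zero_lt_two' ℝ) (by norm_num) h; omega
  have hneg_ne_pred : -(2 : ℝ) ^ n ≠ 2 ^ (n - 1) := by linarith [hpos n, hpos (n - 1)]
  have hsucc := two_zpow_add_one n
  have hpred := two_zpow_eq_two_mul_zpow_sub_one n
  rw [latticeConvTwo_eq_finsum, logLattice_two_sep_sub_mem,
    finsum_mem_insert _ (by simp [hsucc_ne_pred]; linarith [hpos n]) (by simp),
    finsum_mem_insert _ (by simpa using hneg_ne_pred) (by simp), finsum_mem_singleton,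
    show (2 : ℝ) ^ n - 2 ^ (n + 1) = -2 ^ n by linarith,
    show (2 : ℝ) ^ n - -2 ^ n = 2 ^ (n + 1) by linarith,
    show (2 : ℝ) ^ n - 2 ^ (n - 1) = 2 ^ (n - 1) by linarith, add_assoc]

theorem burgers_desnyansky_novikov_general (u : ℤ → ℝ)
    (U : ℝ → ℂ)
    (hUpos : ∀ n : ℤ, U ((2 : ℝ) ^ n) = Complex.I * (u n : ℂ))
    (hUneg : ∀ n : ℤ, U (-((2 : ℝ) ^ n)) = -Complex.I * (u n : ℂ)) :
    ∀ n : ℤ, -(latticeConvTwo (logLattice 2) U (latticeDeriv U) ((2 : ℝ) ^ n)) =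
      Complex.I * ((((2 : ℝ) ^ n : ℝ) : ℂ) * (u (n - 1) : ℂ) ^ 2 -
        (((2 : ℝ) ^ (n + 1) : ℝ) : ℂ) * (u (n + 1) : ℂ) * (u n : ℂ)) := by
  intro n
  rw [latticeConvTwo_logLattice_two_zpow]
  simp only [latticeDeriv, hUpos, hUneg]
  rw [two_zpow_add_one, two_zpow_eq_two_mul_zpow_sub_one n]
  push_cast
  linear_combination (-2 * 2 ^ (n - 1) *
    ((u (n - 1) : ℂ) ^ 2 - 2 * u (n + 1) * u n) * Complex.I) * Complex.I_mul_I

/-- Burgers' representation of the Desnyansky–Novikov shell model: for a real,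
finitely supported sequence `(uₙ)` and the purely imaginary lattice field `U`
with `U(2ⁿ) = i uₙ`, `U(−2ⁿ) = −i uₙ`, the (doubled) convolution on `Λ(2)`
satisfies `−(U ∗ ∂ₓU)(2ⁿ) = i (2ⁿ uₙ₋₁² − 2ⁿ⁺¹ uₙ₊₁ uₙ)` for every `n ∈ ℤ`;
hence the inviscid Burgers equation on `Λ(2)` is the DN shell model. -/
theorem burgers_desnyansky_novikov (u : ℤ → ℝ) (hu : (Function.support u).Finite)
    (U : ℝ → ℂ)
    (hUpos : ∀ n : ℤ, U ((2 : ℝ) ^ n) = Complex.I * (u n : ℂ))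
    (hUneg : ∀ n : ℤ, U (-((2 : ℝ) ^ n)) = -Complex.I * (u n : ℂ))
    (hUsupp : ∀ k : ℝ, k ∉ logLattice 2 → U k = 0) :
    ∀ n : ℤ, -(latticeConvTwo (logLattice 2) U (latticeDeriv U) ((2 : ℝ) ^ n)) =
      Complex.I * ((((2 : ℝ) ^ n : ℝ) : ℂ) * (u (n - 1) : ℂ) ^ 2 -
        (((2 : ℝ) ^ (n + 1) : ℝ) : ℂ) * (u (n + 1) : ℂ) * (u n : ℂ)) :=
  burgers_desnyansky_novikov_general u U hUpos hUneg
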